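/- In the discrete chain-factorized causal model, let a surrogate nuisance collection consist of arbitrary functions p̃ : 𝒳 → ℝ, B̃_k : 𝒳 × 𝒵₁ × ⋯ × 𝒵_{k−1} → ℝ and R̃_k : 𝒳 × 𝒵₁ × ⋯ × 𝒵_{k−1} → ℝ for k = 1, …, K+1; set B̃_{K+2}(x, z_{1:K+1}) := z_{K+1}, ψ̃ := Σ_x q(x)·p̃(x)·B̃_1(x) + E[1{A = a₀}·Y], and let Φ̃ be the expression defining Φ with B_k, R_k, π(a₁∣·), ψ replaced by B̃_k, R̃_k, p̃, ψ̃. Then the second-order von Mises expansion holds exactly: ψ̃ − ψ + E[Φ̃(O)] = Σ_{k=1}^{K+1} Σ_{x, z_{1:k−1}} P(X = x, Z_{1:k−1} = z_{1:k−1}, A = a_{Z_k}) · (R̃_k − R_k)(x, z_{1:k−1}) · (C̃_k − B̃_k)(x, z_{1:k−1}), where C̃_k(x, z_{1:k−1}) := Σ_{z_k} f_k(z_k∣x, z_{1:k−1}, a_{Z_k})·B̃_{k+1}(x, z_{1:k}); in particular the k = K+1 summand equals Σ_{x, z} P(X = x, Z_{1:K} = z, A = a_{Z_{K+1}}) ·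 (R̃_{K+1} − R_{K+1})(x, z) · (μ(x, z) − B̃_{K+1}(x, z)) with μ(x, z) := Σ_y y·f_{K+1}(y∣x, z, a_{Z_{K+1}}). Thus the remainder is a sum of products of nuisance estimation errors. -/

import Mathlib

/-!
Discrete chain-factorized causal model: the observed vector is
`O = (X, A, Z₁, …, Z_K, Y)` with `A` binary (modeled by `Bool`, with `a₁ := !a₀`),
with joint pmf
`p(x,a,z₁,…,z_K,y) = q(x)·π(a∣x)·∏_{k=1}^K f_k(z_k∣x,z_{1:k−1},a)·f_{K+1}(y∣x,z_{1:K},a)`,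
where all kernels are strictly positive pmfs; the outcome takes values in a nonempty
finite set `𝒴 ⊆ ℝ`.
-/

namespace ChainCausal

variable {K : ℕ}

/-- Embedding of the indices `j < k` into `Fin K`, for `k : Fin (K+1)`. -/
def emb (k : Fin (K + 1)) (j : Fin (k : ℕ)) : Fin K :=
  Fin.castLE k.is_le j

/-- The type of prefixes `(z₁, …, z_{(k:ℕ)})`. -/
abbrev PrefAt (Zm : Fin K → Type) (k : Fin (K + 1)) : Type :=
  (j : Fin (k : ℕ)) → Zm (emb k j)

/-- Full mediator vectors `(z₁, …, z_K)`. -/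
abbrev ZVec (Zm : Fin K → Type) : Type := ∀ j : Fin K, Zm j

/-- The prefix type `(z₁, …, z_{k−1})` appearing in the signature of the `k`-th mediator
kernel. -/
abbrev MedPref (Zm : Fin K → Type) (k : Fin K) : Type :=
  (j : Fin (k : ℕ)) → Zm (Fin.castLE k.isLt.le j)

/-- Restriction of a full mediator vector to the prefix below a mediator index. -/
def medTake (Zm : Fin K → Type) (z : ZVec Zm) (k : Fin K) : MedPref Zm k :=
  fun j => z (Fin.castLE k.isLt.le j)

/-- Restriction of a full mediator vector to the prefix below `k : Fin (K+1)`. -/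
def takeAt (Zm : Fin K → Type) (z : ZVec Zm) (k : Fin (K + 1)) : PrefAt Zm k :=
  fun j => z (emb k j)

/-- A discrete chain-factorized causal model: a strictly positive pmf `q` on covariates,
a strictly positive propensity `π(·∣x)` on `{0,1}`, strictly positive mediator kernels
`f_k(·∣x,z_{1:k−1},a)` and a strictly positive outcome kernel `f_{K+1}(·∣x,z_{1:K},a)`. -/
structure Model (K : ℕ) (𝒳 : Type) [Fintype 𝒳] (Zm : Fin K → Type)
    [∀ k, Fintype (Zm k)] (𝒴 : Finset ℝ) : Type where
  q : 𝒳 → ℝ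
  pi : Bool → 𝒳 → ℝ
  f : (k : Fin K) → 𝒳 → MedPref Zm k → Bool → Zm k → ℝ
  fY : 𝒳 → ZVec Zm → Bool → ↥𝒴 → ℝ
  q_pos : ∀ x, 0 < q x
  q_sum : ∑ x, q x = 1
  pi_pos : ∀ a x, 0 < pi a x
  pi_sum : ∀ x, ∑ a, pi a x = 1
  f_pos : ∀ k x h a w, 0 < f k x h a w
  f_sum : ∀ k x h a, ∑ w, f k x h a w = 1
  fY_pos : ∀ x z a y, 0 < fY x z a y
  fY_sum : ∀ x z a, ∑ y, fY x z a y = 1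

variable {𝒳 : Type} [Fintype 𝒳] {Zm : Fin K → Type} [∀ k, Fintype (Zm k)]
  {𝒴 : Finset ℝ}

/-- The joint pmf of `O = (X, A, Z₁, …, Z_K, Y)`. -/
def jointp (M : Model K 𝒳 Zm 𝒴) (x : 𝒳) (a : Bool) (z : ZVec Zm) (y : ↥𝒴) : ℝ :=
  M.q x * M.pi a x * (∏ k, M.f k x (medTake Zm z k) a (z k)) * M.fY x z a y

/-- The `k`-th conditional kernel `f_k(z_k∣x,z_{1:k−1},a)` for `k : Fin (K+1)`
(a mediator kernel if `(k:ℕ) < K`, the outcome kernel if `(k:ℕ) = K`). -/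
def ker (M : Model K 𝒳 Zm 𝒴) (k : Fin (K + 1)) (x : 𝒳) (z : ZVec Zm) (y : ↥𝒴)
    (a : Bool) : ℝ :=
  if h : (k : ℕ) < K then
    M.f ⟨(k : ℕ), h⟩ x (medTake Zm z ⟨(k : ℕ), h⟩) a (z ⟨(k : ℕ), h⟩)
  else M.fY x z a y

/-- The target functional
`ψ := Σ_x q(x)·π(a₁∣x)·Σ_{z,y} y·∏_{k=1}^{K+1} f_k(z_k∣x,z_{1:k−1},a_{Z_k}) + E[1{A = a₀}·Y]`,
where `a₁ = !a₀` and `aZ` are the fixed treatment labels. -/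
def psi (M : Model K 𝒳 Zm 𝒴) (aZ : Fin (K + 1) → Bool) (a0 : Bool) : ℝ :=
  (∑ x, M.q x * M.pi (!a0) x *
      ∑ z : ZVec Zm, ∑ y : ↥𝒴, (y : ℝ) * ∏ k, ker M k x z y (aZ k)) +
    ∑ x, ∑ a, ∑ z : ZVec Zm, ∑ y : ↥𝒴,
      jointp M x a z y * (if a = a0 then (y : ℝ) else 0)

/-- The treatment density ratio `f^r_A(x) := π(a₁∣x)/π(a₀∣x)`. -/
noncomputable def frA (M : Model K 𝒳 Zm 𝒴) (a0 : Bool) (x : 𝒳) : ℝ :=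
  M.pi (!a0) x / M.pi a0 x

/-- Restriction of a prefix of length `(k:ℕ)` to the sub-prefix below `j`. -/
def subPref {Zm : Fin K → Type} (k : Fin (K + 1)) (h : PrefAt Zm k)
    (j : Fin (k : ℕ)) : MedPref Zm (emb k j) :=
  fun i => h (Fin.castLE j.isLt.le i)

/-- The mediator density ratio
`f^r_j(x, z_{1:j}) := f_j(z_j∣x,z_{1:j−1},a_{Z_j}) / f_j(z_j∣x,z_{1:j−1},1−a_{Z_j})`. -/
noncomputable def frMedP (M : Model K 𝒳 Zm 𝒴) (aZ : Fin (K + 1) → Bool) (k : Fin (K + 1))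
    (j : Fin (k : ℕ)) (x : 𝒳) (h : PrefAt Zm k) : ℝ :=
  M.f (emb k j) x (subPref k h j) (aZ (Fin.castSucc (emb k j))) (h j) /
    M.f (emb k j) x (subPref k h j) (!aZ (Fin.castSucc (emb k j))) (h j)

/-- The density-ratio product
`R_k(x,z_{1:k−1}) := (f^r_A(x) if a_{Z_k}=a₀ else 1)·∏_{j<k, a_{Z_j}≠a_{Z_k}} f^r_j(x,z_{1:j})`. -/
noncomputable def RkP (M : Model K 𝒳 Zm 𝒴) (aZ : Fin (K + 1) → Bool) (a0 : Bool)
    (k : Fin (K + 1)) (x : 𝒳) (h : PrefAt Zm k) : ℝ :=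
  (if aZ k = a0 then frA M a0 x else 1) *
    ∏ j : Fin (k : ℕ),
      if aZ (Fin.castSucc (emb k j)) ≠ aZ k then frMedP M aZ k j x h else 1

variable [∀ k, DecidableEq (Zm k)]

/-- The marginal probability `P(X = x, Z_{1:k−1} = h, A = a_{Z_k})`. -/
noncomputable def margP (M : Model K 𝒳 Zm 𝒴) (aZ : Fin (K + 1) → Bool)
    (k : Fin (K + 1)) (x : 𝒳) (h : PrefAt Zm k) : ℝ :=
  ∑ z : ZVec Zm, ∑ y : ↥𝒴,
    jointp M x (aZ k) z y * (if takeAt Zm z k = h then (1 : ℝ) else 0)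

/-- `C̃_k(x, z_{1:k−1}) := Σ_{z_k} f_k(z_k∣x,z_{1:k−1},a_{Z_k})·B̃_{k+1}(x, z_{1:k})`,
where `B̃_{K+2}(x, z_{1:K+1}) := z_{K+1}`. -/
noncomputable def Ck (M : Model K 𝒳 Zm 𝒴) (aZ : Fin (K + 1) → Bool)
    (Btil : (k : Fin (K + 1)) → 𝒳 → PrefAt Zm k → ℝ)
    (k : Fin (K + 1)) (x : 𝒳) (h : PrefAt Zm k) : ℝ :=
  if hk : (k : ℕ) < K then
    ∑ w : Zm ⟨(k : ℕ), hk⟩,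
      M.f ⟨(k : ℕ), hk⟩ x h (aZ k) w *
        Btil ⟨(k : ℕ) + 1, Nat.succ_lt_succ hk⟩ x
          (@Fin.snoc (k : ℕ)
            (fun j => Zm (emb ⟨(k : ℕ) + 1, Nat.succ_lt_succ hk⟩ j)) h w)
  else
    ∑ y : ↥𝒴,
      M.fY x (fun j => h (Fin.cast (le_antisymm (Nat.not_lt.mp hk) k.is_le) j))
        (aZ k) y * (y : ℝ)

/-- `B̃_{k+1}(x, z_{1:k})` as a function of the full tuple, with the convention
`B̃_{K+2}(x, z_{1:K+1}) := z_{K+1}`. -/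
noncomputable def BtilNext (Btil : (k : Fin (K + 1)) → 𝒳 → PrefAt Zm k → ℝ)
    (k : Fin (K + 1)) (x : 𝒳) (z : ZVec Zm) (y : ↥𝒴) : ℝ :=
  if h : (k : ℕ) < K then
    Btil ⟨(k : ℕ) + 1, Nat.succ_lt_succ h⟩ x
      (takeAt Zm z ⟨(k : ℕ) + 1, Nat.succ_lt_succ h⟩)
  else (y : ℝ)

/-- The surrogate functional `ψ̃ := Σ_x q(x)·p̃(x)·B̃_1(x) + E[1{A = a₀}·Y]`. -/
noncomputable def psiTil (M : Model K 𝒳 Zm 𝒴) (a0 : Bool) (ptil : 𝒳 → ℝ)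
    (Btil : (k : Fin (K + 1)) → 𝒳 → PrefAt Zm k → ℝ) : ℝ :=
  (∑ x, M.q x * ptil x * Btil ⟨0, Nat.succ_pos K⟩ x (fun j => j.elim0)) +
    ∑ x, ∑ a, ∑ z : ZVec Zm, ∑ y : ↥𝒴,
      jointp M x a z y * (if a = a0 then (y : ℝ) else 0)

/-- The surrogate influence function `Φ̃`: the expression defining `Φ` with
`B_k, R_k, π(a₁∣·), ψ` replaced by `B̃_k, R̃_k, p̃, ψ̃`. -/
noncomputable def PhiTil (aZ : Fin (K + 1) → Bool) (a0 : Bool)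
    (ptil : 𝒳 → ℝ) (Btil Rtil : (k : Fin (K + 1)) → 𝒳 → PrefAt Zm k → ℝ)
    (psit : ℝ) (x : 𝒳) (a : Bool) (z : ZVec Zm) (y : ↥𝒴) : ℝ :=
  (∑ k : Fin (K + 1),
      (if a = aZ k then (1 : ℝ) else 0) * Rtil k x (takeAt Zm z k) *
        (BtilNext Btil k x z y - Btil k x (takeAt Zm z k))) +
    ((if a = !a0 then (1 : ℝ) else 0) - ptil x) *
      Btil ⟨0, Nat.succ_pos K⟩ x (takeAt Zm z ⟨0, Nat.succ_pos K⟩) +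
    ptil x * Btil ⟨0, Nat.succ_pos K⟩ x (takeAt Zm z ⟨0, Nat.succ_pos K⟩) +
    (if a = a0 then (y : ℝ) else 0) - psit

/-!
Write `G_k(x, z_{<k}) := q(x) π(a₁∣x) ∏_{j<k} f_j(z_j∣x, z_{<j}, a_{Z_j})` for the weight
of the intervened law that defines `ψ`. The ratio `R_k` is exactly the density of `G_k`
with respect to `P(X = x, Z_{<k} = z_{<k}, A = a_{Z_k})`, and integrating out `z_k` gives
`Σ G_k C̃_k = Σ G_{k+1} B̃_{k+1}`, where `Σ G_{K+1} C̃_{K+1}` is the first summand of `ψ`.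
Hence `Σ_k Σ G_k (C̃_k − B̃_k)` telescopes to `ψ − E[1{A = a₀} Y] − E[1{A = a₁} B̃_1]`.
On the other side, the tower property turns `E[1{A = a_{Z_k}} R̃_k (B̃_{k+1} − B̃_k)]`
into `Σ P · R̃_k (C̃_k − B̃_k)`, and `p̃` cancels from `Φ̃` pointwise. Subtracting the two
identities gives the expansion.
-/

section Chain

omit [∀ k, DecidableEq (Zm k)]

section Prefix

omit [∀ k, Fintype (Zm k)]

def prefSnoc (k : Fin K) (h : PrefAt Zm (Fin.castSucc k)) (w : Zm k) : PrefAt Zm k.succ :=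
  Fin.snoc (α := fun j : Fin ((k : ℕ) + 1) => Zm (emb k.succ j)) h w

theorem prefSnoc_castSucc (k : Fin K) (h : PrefAt Zm (Fin.castSucc k)) (w : Zm k) (j : Fin k) :
    prefSnoc k h w (Fin.castSucc j) = h j :=
  Fin.snoc_castSucc (α := fun j : Fin ((k : ℕ) + 1) => Zm (emb k.succ j)) ..

theorem prefSnoc_last (k : Fin K) (h : PrefAt Zm (Fin.castSucc k)) (w : Zm k) :
    prefSnoc k h w (Fin.last k) = w :=
  Fin.snoc_last (α := fun j : Fin ((k : ℕ) + 1) => Zm (emb k.succ j)) ..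

def prefInit (k : Fin K) (h : PrefAt Zm k.succ) : PrefAt Zm (Fin.castSucc k) :=
  fun j => h (Fin.castSucc j)

theorem prefInit_prefSnoc (k : Fin K) (h : PrefAt Zm (Fin.castSucc k)) (w : Zm k) :
    prefInit k (prefSnoc k h w) = h :=
  funext (prefSnoc_castSucc k h w)

theorem subPref_prefSnoc_castSucc (k : Fin K) (h : PrefAt Zm (Fin.castSucc k)) (w : Zm k)
    (j : Fin k) :
    subPref k.succ (prefSnoc k h w) (Fin.castSucc j) = subPref (Fin.castSucc k) h j :=
  funext fun i => prefSnoc_castSucc k h w (Fin.castLE j.isLt.le i)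

theorem subPref_prefSnoc_last (k : Fin K) (h : PrefAt Zm (Fin.castSucc k)) (w : Zm k) :
    subPref k.succ (prefSnoc k h w) (Fin.last k) = fun i => h i :=
  funext fun i => prefSnoc_castSucc k h w i

instance : Unique (PrefAt Zm ⟨0, Nat.succ_pos K⟩) := Pi.uniqueOfIsEmpty _

end Prefix

variable (M : Model K 𝒳 Zm 𝒴) (aZ : Fin (K + 1) → Bool) (a0 : Bool)
  (Bt : (k : Fin (K + 1)) → 𝒳 → PrefAt Zm k → ℝ)

theorem sum_prefAt_succ {β : Type*} [AddCommMonoid β] (k : Fin K) (F : PrefAt Zm k.succ → β) :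
    ∑ h, F h = ∑ h : PrefAt Zm (Fin.castSucc k), ∑ w : Zm k, F (prefSnoc k h w) :=
  ((Fin.snocEquiv fun j : Fin ((k : ℕ) + 1) => Zm (emb k.succ j)).sum_comp F).symm.trans
    (Fintype.sum_prod_type_right _)

def chainDensity (c : Fin K → Bool) (x : 𝒳) (z : ZVec Zm) : ℝ :=
  ∏ j, M.f j x (medTake Zm z j) (c j) (z j)

def prefDensity (c : Fin K → Bool) (k : Fin (K + 1)) (x : 𝒳) (h : PrefAt Zm k) : ℝ :=
  ∏ j : Fin (k : ℕ), M.f (emb k j) x (subPref k h j) (c (emb k j)) (h j)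

theorem prefDensity_zero (c : Fin K → Bool) (x : 𝒳) (h : PrefAt Zm ⟨0, Nat.succ_pos K⟩) :
    prefDensity M c ⟨0, Nat.succ_pos K⟩ x h = 1 :=
  Finset.prod_of_isEmpty _

theorem prefDensity_snoc (c : Fin K → Bool) (k : Fin K) (x : 𝒳)
    (h : PrefAt Zm (Fin.castSucc k)) (w : Zm k) :
    prefDensity M c k.succ x (prefSnoc k h w)
      = prefDensity M c (Fin.castSucc k) x h * M.f k x h (c k) w := by
  simp only [prefDensity, Fin.val_succ]
  rw [Fin.prod_univ_castSucc]
  congr 1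
  · refine Finset.prod_congr rfl fun j _ => ?_
    rw [prefSnoc_castSucc, subPref_prefSnoc_castSucc]
    rfl
  · rw [prefSnoc_last, subPref_prefSnoc_last]
    rfl

theorem sum_prefDensity_succ (c : Fin K → Bool) (k : Fin K) (x : 𝒳)
    (ψ : PrefAt Zm k.succ → ℝ) :
    ∑ h, prefDensity M c k.succ x h * ψ h
      = ∑ h, prefDensity M c (Fin.castSucc k) x h *
          ∑ w, M.f k x h (c k) w * ψ (prefSnoc k h w) := by
  simp only [sum_prefAt_succ k, prefDensity_snoc, Finset.mul_sum, mul_assoc]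

theorem sum_chainDensity_mul_takeAt (c : Fin K → Bool) (x : 𝒳) (k : Fin (K + 1))
    (φ : PrefAt Zm k → ℝ) :
    ∑ z : ZVec Zm, chainDensity M c x z * φ (takeAt Zm z k)
      = ∑ h, prefDensity M c k x h * φ h := by
  induction k using Fin.reverseInduction with
  | last => rfl
  | cast k ih =>
    refine (ih fun h => φ (prefInit k h)).trans ?_
    rw [sum_prefDensity_succ]
    refine Finset.sum_congr rfl fun h _ => ?_
    simp only [prefInit_prefSnoc]
    rw [← Finset.sum_mul, M.f_sum k x h (c k), one_mul]

theorem sum_jointp_mul (x : 𝒳) (a : Bool) (z : ZVec Zm) (g : ↥𝒴 → ℝ) :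
    ∑ y, jointp M x a z y * g y
      = M.q x * M.pi a x * chainDensity M (fun _ => a) x z * ∑ y, M.fY x z a y * g y := by
  simp only [Finset.mul_sum, jointp, chainDensity, mul_assoc]

theorem sum_jointp_mul_takeAt (x : 𝒳) (a : Bool) (k : Fin (K + 1)) (φ : PrefAt Zm k → ℝ) :
    ∑ z : ZVec Zm, ∑ y, jointp M x a z y * φ (takeAt Zm z k)
      = M.q x * M.pi a x * ∑ h, prefDensity M (fun _ => a) k x h * φ h := by
  calc ∑ z : ZVec Zm, ∑ y, jointp M x a z y * φ (takeAt Zm z k)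
      = ∑ z : ZVec Zm,
          M.q x * M.pi a x * (chainDensity M (fun _ => a) x z * φ (takeAt Zm z k)) := by
        refine Finset.sum_congr rfl fun z _ => ?_
        rw [sum_jointp_mul, ← Finset.sum_mul, M.fY_sum, one_mul, mul_assoc]
    _ = _ := by rw [← Finset.mul_sum, sum_chainDensity_mul_takeAt]

theorem sum_jointp : ∑ x, ∑ a, ∑ z : ZVec Zm, ∑ y, jointp M x a z y = 1 := by
  have h := fun x a => sum_jointp_mul_takeAt M x a ⟨0, Nat.succ_pos K⟩ fun _ => 1
  simp only [mul_one, Fintype.sum_unique, prefDensity_zero] at h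
  simp only [h, ← Finset.mul_sum, M.pi_sum, mul_one, M.q_sum]

omit [Fintype 𝒳] [∀ k, Fintype (Zm k)] in
theorem BtilNext_last (x : 𝒳) (z : ZVec Zm) (y : ↥𝒴) :
    BtilNext Bt (Fin.last K) x z y = y :=
  dif_neg (lt_irrefl K)

omit [Fintype 𝒳] [∀ k, Fintype (Zm k)] in
theorem BtilNext_castSucc (k : Fin K) (x : 𝒳) (z : ZVec Zm) (y : ↥𝒴) :
    BtilNext Bt (Fin.castSucc k) x z y = Bt k.succ x (takeAt Zm z k.succ) :=
  dif_pos k.isLt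

theorem Ck_last (x : 𝒳) (h : PrefAt Zm (Fin.last K)) :
    Ck M aZ Bt (Fin.last K) x h = ∑ y, M.fY x h (aZ (Fin.last K)) y * y :=
  dif_neg (lt_irrefl K)

theorem Ck_castSucc (k : Fin K) (x : 𝒳) (h : PrefAt Zm (Fin.castSucc k)) :
    Ck M aZ Bt (Fin.castSucc k) x h
      = ∑ w, M.f k x h (aZ (Fin.castSucc k)) w * Bt k.succ x (prefSnoc k h w) :=
  dif_pos k.isLt

def expect : (𝒳 → Bool → ZVec Zm → ↥𝒴 → ℝ) →ₗ[ℝ] ℝ where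
  toFun g := ∑ x, ∑ a, ∑ z : ZVec Zm, ∑ y, jointp M x a z y * g x a z y
  map_add' g g' := by simp only [Pi.add_apply, mul_add, Finset.sum_add_distrib]
  map_smul' c g := by simp only [Pi.smul_apply, smul_eq_mul, RingHom.id_apply, Finset.mul_sum,
    mul_left_comm]

theorem expect_apply (g : 𝒳 → Bool → ZVec Zm → ↥𝒴 → ℝ) :
    expect M g = ∑ x, ∑ a, ∑ z : ZVec Zm, ∑ y, jointp M x a z y * g x a z y := rfl

theorem expect_const (c : ℝ) : expect M (fun _ _ _ _ => c) = c := by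
  simp only [expect_apply, ← Finset.sum_mul, sum_jointp, one_mul]

theorem expect_indicator_mul (b : Bool) (g : 𝒳 → ZVec Zm → ↥𝒴 → ℝ) :
    expect M (fun x a z y => (if a = b then 1 else 0) * g x z y)
      = ∑ x, ∑ z : ZVec Zm, ∑ y, jointp M x b z y * g x z y := by
  simp only [expect_apply, ite_mul, one_mul, zero_mul, mul_ite, mul_zero, Finset.sum_ite_irrel,
    Finset.sum_const_zero, Finset.sum_ite_eq', Finset.mem_univ, if_true]

theorem expect_treated :
    expect M (fun x a z _ => (if a = !a0 then 1 else 0) *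
        Bt ⟨0, Nat.succ_pos K⟩ x (takeAt Zm z ⟨0, Nat.succ_pos K⟩))
      = ∑ x, M.q x * M.pi (!a0) x * Bt ⟨0, Nat.succ_pos K⟩ x default := by
  rw [expect_indicator_mul]
  refine Finset.sum_congr rfl fun x _ => ?_
  rw [sum_jointp_mul_takeAt M x (!a0) ⟨0, Nat.succ_pos K⟩ (Bt ⟨0, Nat.succ_pos K⟩ x),
    Fintype.sum_unique, prefDensity_zero, one_mul]

def targetDensity (k : Fin (K + 1)) (x : 𝒳) (h : PrefAt Zm k) : ℝ :=
  M.q x * M.pi (!a0) x * prefDensity M (fun j => aZ (Fin.castSucc j)) k x h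

theorem pi_mul_ite_frA (b : Bool) (x : 𝒳) :
    M.pi b x * (if b = a0 then frA M a0 x else 1) = M.pi (!a0) x := by
  by_cases hb : b = a0
  · rw [if_pos hb, hb, frA, mul_div_cancel₀ _ (M.pi_pos a0 x).ne']
  · rw [if_neg hb, mul_one, Bool.eq_not_of_ne hb]

theorem f_mul_ite_frMedP (k : Fin (K + 1)) (j : Fin k) (x : 𝒳) (h : PrefAt Zm k) :
    M.f (emb k j) x (subPref k h j) (aZ k) (h j)
        * (if aZ (Fin.castSucc (emb k j)) ≠ aZ k then frMedP M aZ k j x h else 1)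
      = M.f (emb k j) x (subPref k h j) (aZ (Fin.castSucc (emb k j))) (h j) := by
  by_cases hj : aZ (Fin.castSucc (emb k j)) = aZ k
  · rw [if_neg (not_not_intro hj), mul_one, hj]
  · rw [if_pos hj, frMedP, ← Bool.eq_not_of_ne (Ne.symm hj),
      mul_div_cancel₀ _ (M.f_pos _ _ _ _ _).ne']

theorem prod_ker (x : 𝒳) (z : ZVec Zm) (y : ↥𝒴) :
    ∏ k, ker M k x z y (aZ k)
      = chainDensity M (fun j => aZ (Fin.castSucc j)) x z * M.fY x z (aZ (Fin.last K)) y := by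
  rw [Fin.prod_univ_castSucc]
  congr 1
  · exact Finset.prod_congr rfl fun j _ => dif_pos j.isLt
  · exact dif_neg (lt_irrefl K)

/-- Indexed by `ℕ` so that the index `K + 1`, where `B̃_{K+2} = y`, is the first summand
of `ψ`. -/
def targetMean (n : ℕ) : ℝ :=
  if hn : n < K + 1 then ∑ x, ∑ h, targetDensity M aZ a0 ⟨n, hn⟩ x h * Bt ⟨n, hn⟩ x h
  else ∑ x, M.q x * M.pi (!a0) x *
    ∑ z : ZVec Zm, ∑ y : ↥𝒴, (y : ℝ) * ∏ k, ker M k x z y (aZ k)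

theorem targetMean_zero :
    targetMean M aZ a0 Bt 0
      = ∑ x, M.q x * M.pi (!a0) x * Bt ⟨0, Nat.succ_pos K⟩ x default := by
  simp only [targetMean, dif_pos (Nat.succ_pos K), targetDensity, prefDensity_zero, mul_one,
    Fintype.sum_unique]

theorem sum_targetDensity_mul_Ck (k : Fin (K + 1)) :
    ∑ x, ∑ h, targetDensity M aZ a0 k x h * Ck M aZ Bt k x h
      = targetMean M aZ a0 Bt (k + 1) := by
  induction k using Fin.lastCases with
  | last =>
    rw [targetMean, dif_neg (by simp)]
    refine Finset.sum_congr rfl fun x _ => ?_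
    simp only [targetDensity, Ck_last, prod_ker, mul_assoc, ← Finset.mul_sum]
    refine congrArg _ (congrArg _ (Finset.sum_congr rfl fun z _ => ?_))
    rw [Finset.mul_sum]
    have hz : prefDensity M (fun j => aZ (Fin.castSucc j)) (Fin.last K) x z
        = chainDensity M (fun j => aZ (Fin.castSucc j)) x z := rfl
    exact Finset.sum_congr rfl fun y _ => by rw [hz]; ring
  | cast k =>
    rw [targetMean, dif_pos (by simp)]
    refine Finset.sum_congr rfl fun x _ => ?_
    show _ = ∑ h, targetDensity M aZ a0 k.succ x h * Bt k.succ x h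
    simp only [targetDensity, mul_assoc, ← Finset.mul_sum, sum_prefDensity_succ, Ck_castSucc]

theorem sum_targetDensity_mul_sub :
    ∑ k, ∑ x, ∑ h, targetDensity M aZ a0 k x h * (Ck M aZ Bt k x h - Bt k x h)
      = targetMean M aZ a0 Bt (K + 1) - targetMean M aZ a0 Bt 0 := by
  have hstep (k : Fin (K + 1)) :
      ∑ x, ∑ h, targetDensity M aZ a0 k x h * (Ck M aZ Bt k x h - Bt k x h)
        = targetMean M aZ a0 Bt (k + 1) - targetMean M aZ a0 Bt k := by
    simp only [mul_sub, Finset.sum_sub_distrib, sum_targetDensity_mul_Ck, targetMean,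
      dif_pos k.isLt]
  simp only [hstep, Finset.sum_range_sub,
    Fin.sum_univ_eq_sum_range fun i => targetMean M aZ a0 Bt (i + 1) - targetMean M aZ a0 Bt i]

end Chain

section Residual

variable (M : Model K 𝒳 Zm 𝒴) (aZ : Fin (K + 1) → Bool) (a0 : Bool)
  (Bt Rt : (k : Fin (K + 1)) → 𝒳 → PrefAt Zm k → ℝ)

theorem margP_eq (k : Fin (K + 1)) (x : 𝒳) (h : PrefAt Zm k) :
    margP M aZ k x h = M.q x * M.pi (aZ k) x * prefDensity M (fun _ => aZ k) k x h := by
  rw [margP, sum_jointp_mul_takeAt M x (aZ k) k fun h' => if h' = h then 1 else 0]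
  simp only [mul_ite, mul_one, mul_zero, Finset.sum_ite_eq', Finset.mem_univ, if_true]

theorem sum_jointp_mul_takeAt_eq_sum_margP (k : Fin (K + 1)) (x : 𝒳) (φ : PrefAt Zm k → ℝ) :
    ∑ z : ZVec Zm, ∑ y, jointp M x (aZ k) z y * φ (takeAt Zm z k)
      = ∑ h, margP M aZ k x h * φ h := by
  simp only [sum_jointp_mul_takeAt, margP_eq, Finset.mul_sum, mul_assoc]

/-- Tower property: given `Z_{<k}`, the conditional mean of `B̃_{k+1}` under `A = a_{Z_k}` is
`C̃_k`. -/
theorem sum_jointp_mul_BtilNext (k : Fin (K + 1)) (x : 𝒳) (φ : PrefAt Zm k → ℝ) :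
    ∑ z : ZVec Zm, ∑ y, jointp M x (aZ k) z y * (φ (takeAt Zm z k) * BtilNext Bt k x z y)
      = ∑ h, margP M aZ k x h * (φ h * Ck M aZ Bt k x h) := by
  rw [← sum_jointp_mul_takeAt_eq_sum_margP M aZ k x]
  induction k using Fin.lastCases with
  | last =>
    refine Finset.sum_congr rfl fun z _ => ?_
    simp only [BtilNext_last, Ck_last]
    rw [show takeAt Zm z (Fin.last K) = z from rfl, sum_jointp_mul, sum_jointp_mul,
      ← Finset.sum_mul Finset.univ (M.fY x z (aZ (Fin.last K))), M.fY_sum, one_mul]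
    simp only [Finset.mul_sum]
    exact Finset.sum_congr rfl fun y _ => by ring
  | cast k =>
    simp only [BtilNext_castSucc]
    set a := aZ (Fin.castSucc k)
    calc _ = M.q x * M.pi a x * ∑ h, prefDensity M (fun _ => a) k.succ x h *
            (φ (prefInit k h) * Bt k.succ x h) :=
          sum_jointp_mul_takeAt M x a k.succ fun h => φ (prefInit k h) * Bt k.succ x h
      _ = M.q x * M.pi a x * ∑ h, prefDensity M (fun _ => a) (Fin.castSucc k) x h *
            (φ h * Ck M aZ Bt (Fin.castSucc k) x h) := by
          rw [sum_prefDensity_succ]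
          simp only [prefInit_prefSnoc, Ck_castSucc, Finset.mul_sum]
          exact Finset.sum_congr rfl fun h _ => Finset.sum_congr rfl fun w _ => by ring
      _ = _ := (sum_jointp_mul_takeAt M x a _ fun h => φ h * Ck M aZ Bt (Fin.castSucc k) x h).symm

theorem expect_residual (k : Fin (K + 1)) :
    expect M (fun x a z y => (if a = aZ k then 1 else 0) *
        (Rt k x (takeAt Zm z k) * (BtilNext Bt k x z y - Bt k x (takeAt Zm z k))))
      = ∑ x, ∑ h, margP M aZ k x h * Rt k x h * (Ck M aZ Bt k x h - Bt k x h) := by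
  rw [expect_indicator_mul]
  refine Finset.sum_congr rfl fun x _ => ?_
  have hB := sum_jointp_mul_takeAt_eq_sum_margP M aZ k x fun h => Rt k x h * Bt k x h
  simp only [mul_sub, Finset.sum_sub_distrib, sum_jointp_mul_BtilNext, hB, mul_assoc]

theorem expect_PhiTil (ptil : 𝒳 → ℝ) (psit : ℝ) :
    expect M (PhiTil aZ a0 ptil Bt Rt psit)
      = ∑ k, ∑ x, ∑ h, margP M aZ k x h * Rt k x h * (Ck M aZ Bt k x h - Bt k x h)
        + ∑ x, M.q x * M.pi (!a0) x * Bt ⟨0, Nat.succ_pos K⟩ x default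
        + expect M (fun _ a _ y => if a = a0 then (y : ℝ) else 0) - psit := by
  have hPhi : PhiTil aZ a0 ptil Bt Rt psit
      = (∑ k, fun x a z (y : ↥𝒴) => (if a = aZ k then 1 else 0) *
          (Rt k x (takeAt Zm z k) * (BtilNext Bt k x z y - Bt k x (takeAt Zm z k))))
        + (fun x a z (_ : ↥𝒴) => (if a = !a0 then 1 else 0) *
            Bt ⟨0, Nat.succ_pos K⟩ x (takeAt Zm z ⟨0, Nat.succ_pos K⟩))
        + (fun (_ : 𝒳) a (_ : ZVec Zm) (y : ↥𝒴) => if a = a0 then (y : ℝ) else 0)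
        - fun _ _ _ _ => psit := by
    funext x a z y
    simp only [PhiTil, Pi.add_apply, Pi.sub_apply, Finset.sum_apply]
    ring_nf
  rw [hPhi, map_sub, map_add, map_add, map_sum, expect_const, expect_treated]
  simp only [expect_residual]

theorem margP_mul_RkP (k : Fin (K + 1)) (x : 𝒳) (h : PrefAt Zm k) :
    margP M aZ k x h * RkP M aZ a0 k x h = targetDensity M aZ a0 k x h := by
  rw [margP_eq, RkP, targetDensity, ← pi_mul_ite_frA M a0 (aZ k) x, prefDensity, prefDensity]
  simp only [← f_mul_ite_frMedP M aZ k _ x h, Finset.prod_mul_distrib]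
  ring

theorem sum_margP_mul_sub_RkP :
    ∑ k, ∑ x, ∑ h,
        margP M aZ k x h * (Rt k x h - RkP M aZ a0 k x h) * (Ck M aZ Bt k x h - Bt k x h)
      = ∑ k, ∑ x, ∑ h, margP M aZ k x h * Rt k x h * (Ck M aZ Bt k x h - Bt k x h)
        - (targetMean M aZ a0 Bt (K + 1) - targetMean M aZ a0 Bt 0) := by
  rw [← sum_targetDensity_mul_sub]
  simp only [← Finset.sum_sub_distrib, ← margP_mul_RkP M aZ a0]
  exact Finset.sum_congr rfl fun k _ => Finset.sum_congr rfl fun x _ =>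
    Finset.sum_congr rfl fun h _ => by ring

end Residual

theorem statement_3_general
    (M : Model K 𝒳 Zm 𝒴) (aZ : Fin (K + 1) → Bool) (a0 : Bool)
    (ptil : 𝒳 → ℝ) (Btil Rtil : (k : Fin (K + 1)) → 𝒳 → PrefAt Zm k → ℝ) :
    (psiTil M a0 ptil Btil - psi M aZ a0 +
        ∑ x, ∑ a, ∑ z : ZVec Zm, ∑ y : ↥𝒴,
          jointp M x a z y *
            PhiTil aZ a0 ptil Btil Rtil (psiTil M a0 ptil Btil) x a z y =
      ∑ k : Fin (K + 1), ∑ x, ∑ h : PrefAt Zm k,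
        margP M aZ k x h * (Rtil k x h - RkP M aZ a0 k x h) *
          (Ck M aZ Btil k x h - Btil k x h)) ∧
    ((∑ x, ∑ h : PrefAt Zm (Fin.last K),
        margP M aZ (Fin.last K) x h *
          (Rtil (Fin.last K) x h - RkP M aZ a0 (Fin.last K) x h) *
          (Ck M aZ Btil (Fin.last K) x h - Btil (Fin.last K) x h)) =
      ∑ x, ∑ h : PrefAt Zm (Fin.last K),
        margP M aZ (Fin.last K) x h *
          (Rtil (Fin.last K) x h - RkP M aZ a0 (Fin.last K) x h) *
          ((∑ y : ↥𝒴, (y : ℝ) * M.fY x h (aZ (Fin.last K)) y) -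
            Btil (Fin.last K) x h)) := by
  refine ⟨?_, ?_⟩
  · have hPhi := expect_PhiTil M aZ a0 Btil Rtil ptil (psiTil M a0 ptil Btil)
    have hpsi : psi M aZ a0 = targetMean M aZ a0 Btil (K + 1)
        + expect M (fun _ a _ y => if a = a0 then (y : ℝ) else 0) := by
      rw [targetMean, dif_neg (lt_irrefl _)]
      rfl
    rw [expect_apply] at hPhi
    rw [hPhi, sum_margP_mul_sub_RkP, hpsi, targetMean_zero]
    ring
  · simp only [Ck_last, mul_comm]

/-- exact second-order von Mises expansion.  For arbitrary surrogate
nuisances `p̃, B̃_k, R̃_k`,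
`ψ̃ − ψ + E[Φ̃(O)] = Σ_{k=1}^{K+1} Σ_{x,z_{1:k−1}} P(X=x,Z_{1:k−1}=z_{1:k−1},A=a_{Z_k})
  ·(R̃_k − R_k)(x,z_{1:k−1})·(C̃_k − B̃_k)(x,z_{1:k−1})`,
and in particular the `k = K+1` summand equals the same expression with
`C̃_{K+1}(x,z)` replaced by `μ(x,z) := Σ_y y·f_{K+1}(y∣x,z,a_{Z_{K+1}})`. -/
theorem statement_3 [Nonempty 𝒳] [∀ k, Nonempty (Zm k)] (h𝒴 : 𝒴.Nonempty)
    (M : Model K 𝒳 Zm 𝒴) (aZ : Fin (K + 1) → Bool) (a0 : Bool)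
    (ptil : 𝒳 → ℝ) (Btil Rtil : (k : Fin (K + 1)) → 𝒳 → PrefAt Zm k → ℝ) :
    (psiTil M a0 ptil Btil - psi M aZ a0 +
        ∑ x, ∑ a, ∑ z : ZVec Zm, ∑ y : ↥𝒴,
          jointp M x a z y *
            PhiTil aZ a0 ptil Btil Rtil (psiTil M a0 ptil Btil) x a z y =
      ∑ k : Fin (K + 1), ∑ x, ∑ h : PrefAt Zm k,
        margP M aZ k x h * (Rtil k x h - RkP M aZ a0 k x h) *
          (Ck M aZ Btil k x h - Btil k x h)) ∧
    ((∑ x, ∑ h : PrefAt Zm (Fin.last K),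
        margP M aZ (Fin.last K) x h *
          (Rtil (Fin.last K) x h - RkP M aZ a0 (Fin.last K) x h) *
          (Ck M aZ Btil (Fin.last K) x h - Btil (Fin.last K) x h)) =
      ∑ x, ∑ h : PrefAt Zm (Fin.last K),
        margP M aZ (Fin.last K) x h *
          (Rtil (Fin.last K) x h - RkP M aZ a0 (Fin.last K) x h) *
          ((∑ y : ↥𝒴, (y : ℝ) * M.fY x h (aZ (Fin.last K)) y) -
            Btil (Fin.last K) x h)) :=
  statement_3_general M aZ a0 ptil Btil Rtil

end ChainCausal
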